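/- There is no σ-complete ideal I on ω₁ containing all singletons such that I is ℵ₁-saturated: for any such ideal there exist ℵ₁-many subsets of ω₁, each not in I, whose pairwise intersections are in I. -/

import Mathlib

/-- The underlying set of `ω₁`, as a type. -/
def OmegaOne : Type 1 := {o : Ordinal.{0} // o < (Cardinal.aleph 1).ord}

/-!
Ulam's argument. For each `b` fix an injection `f b` of the countable set of predecessors of `b`
into `ℕ`, and put `b` into the entry `(n, a)` of the matrix when `a < b` and `f b a = n`. The
entries of a row are pairwise disjoint, and column `a` covers the co-countable set `Ioi a`, so by
σ-completeness every column has an `I`-positive entry. As `ω₁` is uncountable, some row then has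
uncountably many, hence `ℵ₁` many, positive entries.
-/

open Function Set

section SigmaIdeal

variable {α : Type*} {I : Set (Set α)}

theorem union_mem_of_sigma (hdown : ∀ B C : Set α, B ⊆ C → C ∈ I → B ∈ I)
    (hsigma : ∀ f : ℕ → Set α, (∀ n, f n ∈ I) → (⋃ n, f n) ∈ I)
    {B C : Set α} (hB : B ∈ I) (hC : C ∈ I) : B ∪ C ∈ I := by
  refine hdown _ _ ?_ (hsigma (fun n => if n = 0 then B else C) fun n => by split <;> assumption)
  rintro x (hx | hx)
  exacts [mem_iUnion.2 ⟨0, hx⟩, mem_iUnion.2 ⟨1, hx⟩]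

theorem countable_mem_of_sigma [Nonempty α] (hdown : ∀ B C : Set α, B ⊆ C → C ∈ I → B ∈ I)
    (hsigma : ∀ f : ℕ → Set α, (∀ n, f n ∈ I) → (⋃ n, f n) ∈ I)
    (hsing : ∀ a : α, {a} ∈ I) {s : Set α} (hs : s.Countable) : s ∈ I := by
  obtain ⟨f, hsf⟩ := countable_iff_exists_subset_range.1 hs
  rw [← iUnion_singleton_eq_range] at hsf
  exact hdown _ _ hsf (hsigma _ fun n => hsing (f n))

end SigmaIdeal

section UlamMatrix

variable {α : Type*} [LinearOrder α]

def ulamMatrix (f : ∀ b : α, Iio b → ℕ) (n : ℕ) (a : α) : Set α :=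
  {b | ∃ h : a < b, f b ⟨a, h⟩ = n}

theorem ulamMatrix_disjoint {f : ∀ b : α, Iio b → ℕ} (hf : ∀ b, Injective (f b)) (n : ℕ)
    {a a' : α} (h : a ≠ a') : Disjoint (ulamMatrix f n a) (ulamMatrix f n a') :=
  disjoint_left.2 fun b ⟨_, hn⟩ ⟨_, hn'⟩ =>
    h (congrArg Subtype.val (hf b (hn.trans hn'.symm)))

theorem iUnion_ulamMatrix (f : ∀ b : α, Iio b → ℕ) (a : α) :
    ⋃ n, ulamMatrix f n a = Ioi a := by
  ext b
  simp only [ulamMatrix, mem_iUnion, mem_Ioi]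
  exact ⟨fun ⟨_, h, _⟩ => h, fun h => ⟨_, h, rfl⟩⟩

theorem exists_ulamMatrix_notMem {I : Set (Set α)} (hIio : ∀ b : α, (Iio b).Countable)
    (hdown : ∀ B C : Set α, B ⊆ C → C ∈ I → B ∈ I)
    (hsigma : ∀ f : ℕ → Set α, (∀ n, f n ∈ I) → (⋃ n, f n) ∈ I)
    (hsing : ∀ a : α, {a} ∈ I) (hproper : univ ∉ I) (f : ∀ b : α, Iio b → ℕ) (a : α) :
    ∃ n, ulamMatrix f n a ∉ I := by
  have : Nonempty α := ⟨a⟩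
  by_contra! h
  have hIic : Iic a ∈ I := countable_mem_of_sigma hdown hsigma hsing <| by
    rw [← Iio_insert]; exact (hIio a).insert a
  have hIoi : Ioi a ∈ I := iUnion_ulamMatrix f a ▸ hsigma _ h
  exact hproper (Iic_union_Ioi (a := a) ▸ union_mem_of_sigma hdown hsigma hIic hIoi)

theorem exists_pairwise_disjoint_not_countable_notMem [Uncountable α] {I : Set (Set α)}
    (hIio : ∀ b : α, (Iio b).Countable)
    (hdown : ∀ B C : Set α, B ⊆ C → C ∈ I → B ∈ I)
    (hsigma : ∀ f : ℕ → Set α, (∀ n, f n ∈ I) → (⋃ n, f n) ∈ I)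
    (hsing : ∀ a : α, {a} ∈ I) (hproper : univ ∉ I) :
    ∃ S : α → Set α, Pairwise (Disjoint on S) ∧ ¬ {a | S a ∉ I}.Countable := by
  choose f hf using fun b => (hIio b).to_subtype.exists_injective_nat
  have hrows : ⋃ n, {a | ulamMatrix f n a ∉ I} = univ :=
    eq_univ_of_forall fun a =>
      mem_iUnion.2 (exists_ulamMatrix_notMem hIio hdown hsigma hsing hproper f a)
  obtain ⟨n, hn⟩ : ∃ n, ¬ {a | ulamMatrix f n a ∉ I}.Countable := by
    by_contra! h
    exact not_countable_univ (hrows ▸ countable_iUnion h)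
  exact ⟨ulamMatrix f n, fun a a' h => ulamMatrix_disjoint hf n h, hn⟩

end UlamMatrix

namespace OmegaOne

open Cardinal

noncomputable instance : LinearOrder OmegaOne :=
  inferInstanceAs (LinearOrder {o : Ordinal.{0} // o < (aleph 1).ord})

theorem countable_Iio (b : OmegaOne) : (Iio b).Countable := by
  have : (Iio b.1).Countable := by
    rw [← le_aleph0_iff_set_countable, mk_Iio_ordinal, lift_le_aleph0, ← lt_aleph_one_iff,
      ← lt_ord]
    exact b.2
  exact this.preimage Subtype.val_injective

theorem mk_eq : #OmegaOne = ℵ₁ := by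
  change #(Iio (ord ℵ₁)) = _
  rw [mk_Iio_ordinal, card_ord, lift_aleph, Ordinal.lift_one]

end OmegaOne

/-- No σ-complete proper ideal on `ω₁` containing all singletons is `ℵ₁`-saturated:
there are `ℵ₁` many `I`-positive sets with pairwise intersections in `I`. -/
theorem no_aleph1_saturated_ideal (I : Set (Set OmegaOne))
    (hdown : ∀ B C : Set OmegaOne, B ⊆ C → C ∈ I → B ∈ I)
    (hsigma : ∀ f : ℕ → Set OmegaOne, (∀ n, f n ∈ I) → (⋃ n, f n) ∈ I)
    (hsing : ∀ a : OmegaOne, ({a} : Set OmegaOne) ∈ I)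
    (hproper : (Set.univ : Set OmegaOne) ∉ I) :
    ∃ S : OmegaOne → Set OmegaOne,
      (∀ a, S a ∉ I) ∧ ∀ a b, a ≠ b → S a ∩ S b ∈ I := by
  have : Uncountable OmegaOne := by
    rw [← Cardinal.aleph0_lt_mk_iff, OmegaOne.mk_eq]
    exact Cardinal.aleph0_lt_aleph_one
  obtain ⟨S, hdisj, hpos⟩ := exists_pairwise_disjoint_not_countable_notMem
    OmegaOne.countable_Iio hdown hsigma hsing hproper
  obtain ⟨g⟩ : Cardinal.mk OmegaOne ≤ Cardinal.mk {a | S a ∉ I} := by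
    rw [OmegaOne.mk_eq, Cardinal.aleph_one_le_iff, ← not_le, Cardinal.le_aleph0_iff_set_countable]
    exact hpos
  refine ⟨fun a => S (g a), fun a => (g a).2, fun a b hab => ?_⟩
  have hab' : (g a : OmegaOne) ≠ g b := fun h => hab (g.injective (Subtype.ext h))
  exact hdown _ _ ((hdisj hab').le_bot.trans (empty_subset {a})) (hsing a)
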